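/- Suppose every function on the vertices of a connected locally finite infinite graph G with gradient in ℓ^p takes only one value at infinity (condition (2_p)). Then every harmonic function with gradient in ℓ^p is constant (condition (3_p)). -/
import Mathlib


/-- `f` is harmonic on the locally finite graph `G`. -/
def IsHarmonic {V : Type*} (G : SimpleGraph V) (hlf : ∀ v, (G.neighborSet v).Finite)
    (f : V → ℝ) : Prop :=
  ∀ v, f v = (∑ w ∈ (hlf v).toFinset, f w) / ((hlf v).toFinset.card : ℝ)

/-- The gradient of `f` is in ℓ^p over the (oriented) edges of `G`. -/
def GradLp {V : Type*} (G : SimpleGraph V) (p : ℝ) (f : V → ℝ) : Prop :=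
  Summable (fun e : {e : V × V // G.Adj e.1 e.2} => |f e.1.2 - f e.1.1| ^ p)

/-- `f` takes only one value at infinity along the exhaustion by balls around `o`. -/
def OneValueAtInfinity {V : Type*} (G : SimpleGraph V) (o : V) (f : V → ℝ) : Prop :=
  ∃ c : ℝ, ∀ ε > (0 : ℝ), ∃ n : ℕ, ∀ v, n < G.dist o v → |f v - c| ≤ ε

/-- Balls in a connected locally finite graph are finite. -/
lemma ball_finite {V : Type*} (G : SimpleGraph V) (hconn : G.Connected)
    (hlf : ∀ v, (G.neighborSet v).Finite) (o : V) :
    ∀ n : ℕ, {v : V | G.dist o v ≤ n}.Finite := by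
  intro n
  induction n with
  | zero =>
    apply (Set.finite_singleton o).subset
    intro v hv
    simp only [Set.mem_setOf_eq, Nat.le_zero] at hv
    have := (hconn.dist_eq_zero_iff).mp hv
    simp [this]
  | succ n ih =>
    have hsub : {v : V | G.dist o v ≤ n + 1} ⊆
        {v : V | G.dist o v ≤ n} ∪ ⋃ u ∈ {v : V | G.dist o v ≤ n}, G.neighborSet u := by
      intro v hv
      simp only [Set.mem_setOf_eq] at hv
      by_cases h : G.dist o v ≤ n
      · exact Or.inl h
      · right
        have hd : G.dist o v = n + 1 := le_antisymm hv (Nat.succ_le_of_lt (not_le.mp h))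
        have hr : G.Reachable o v := hconn o v
        obtain ⟨p, hp⟩ := hr.exists_walk_length_eq_dist
        have hlen : p.reverse.length = n + 1 := by
          rw [SimpleGraph.Walk.length_reverse, hp, hd]
        have hnn : ¬ p.reverse.Nil := by
          rw [SimpleGraph.Walk.nil_iff_length_eq, hlen]; omega
        obtain ⟨u, hadj, q, hq⟩ := SimpleGraph.Walk.not_nil_iff.mp hnn
        have hqlen : q.length = n := by
          have := hlen
          rw [hq, SimpleGraph.Walk.length_cons] at this
          omega
        have hu : G.dist o u ≤ n := by
          calc G.dist o u ≤ q.reverse.length := SimpleGraph.dist_le q.reverse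
            _ = n := by rw [SimpleGraph.Walk.length_reverse, hqlen]
        exact Set.mem_biUnion hu hadj.symm
    exact (ih.union (ih.biUnion fun u _ => hlf u)).subset hsub

lemma exists_adj {V : Type*} (G : SimpleGraph V) (hconn : G.Connected) [Infinite V]
    (x : V) : ∃ y, G.Adj x y := by
  obtain ⟨y, hy⟩ := exists_ne x
  obtain ⟨p⟩ := hconn x y
  cases p with
  | nil => exact absurd rfl hy
  | cons h q => exact ⟨_, h⟩

/-- At a global maximum, all neighbors of a harmonic function attain the maximum. -/
lemma harm_max_adj {V : Type*} (G : SimpleGraph V) (hconn : G.Connected) [Infinite V]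
    (hlf : ∀ v, (G.neighborSet v).Finite) (f : V → ℝ) (hf : IsHarmonic G hlf f)
    (x : V) (hmax : ∀ z, f z ≤ f x) : ∀ y, G.Adj x y → f y = f x := by
  have hne : (hlf x).toFinset.Nonempty := by
    obtain ⟨y, hy⟩ := exists_adj G hconn x
    exact ⟨y, by simp [Set.Finite.mem_toFinset, hy]⟩
  have hcard : (0 : ℝ) < ((hlf x).toFinset.card : ℝ) := by
    exact_mod_cast Finset.card_pos.mpr hne
  have hsum : ∑ w ∈ (hlf x).toFinset, f w = ∑ w ∈ (hlf x).toFinset, f x := by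
    have h := hf x
    rw [eq_div_iff (ne_of_gt hcard)] at h
    rw [Finset.sum_const, nsmul_eq_mul]
    linarith [h]
  have key := (Finset.sum_eq_sum_iff_of_le (fun i _ => hmax i)).mp hsum
  intro y hy
  exact key y (by simp [Set.Finite.mem_toFinset, hy])

lemma harm_max_const {V : Type*} (G : SimpleGraph V) (hconn : G.Connected) [Infinite V]
    (hlf : ∀ v, (G.neighborSet v).Finite) (f : V → ℝ) (hf : IsHarmonic G hlf f)
    (x : V) (hmax : ∀ z, f z ≤ f x) : ∀ z, f z = f x := by
  have step : ∀ a b : V, (p : G.Walk a b) → f a = f x → f b = f x := by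
    intro a b p
    induction p with
    | nil => exact fun h => h
    | @cons a y b h q ih =>
      intro ha
      apply ih
      have := harm_max_adj G hconn hlf f hf a (fun z => ha ▸ hmax z) y h
      rw [this, ha]
  intro z
  exact step x z (hconn x z).some rfl

/-- If a harmonic function has one value at infinity, it is bounded above by that value. -/
lemma harm_le_c {V : Type*} (G : SimpleGraph V) (hconn : G.Connected)
    (hlf : ∀ v, (G.neighborSet v).Finite) [Infinite V] (o : V) (f : V → ℝ)
    (hf : IsHarmonic G hlf f) (c : ℝ)
    (hc : ∀ ε > (0 : ℝ), ∃ n : ℕ, ∀ v, n < G.dist o v → |f v - c| ≤ ε) :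
    ∀ v, f v ≤ c := by
  by_contra h
  push_neg at h
  obtain ⟨v, hv⟩ := h
  set ε := (f v - c) / 2 with hε
  have hεpos : 0 < ε := by simp [hε]; linarith
  obtain ⟨n, hn⟩ := hc ε hεpos
  have hB := ball_finite G hconn hlf o n
  have hvB : G.dist o v ≤ n := by
    by_contra h'
    have := le_of_abs_le (hn v (not_le.mp h'))
    simp [hε] at this; linarith
  obtain ⟨u, huB, hu⟩ := hB.toFinset.exists_max_image f ⟨v, by simpa using hvB⟩
  have hfvu : f v ≤ f u := hu v (by simpa using hvB)
  have humax : ∀ z, f z ≤ f u := by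
    intro z
    by_cases hz : G.dist o z ≤ n
    · exact hu z (by simpa using hz)
    · have h1 := le_of_abs_le (hn z (not_le.mp hz))
      simp only [hε] at h1 ⊢
      linarith
  have hconst := harm_max_const G hconn hlf f hf u humax
  obtain ⟨w, hw⟩ := hB.infinite_compl.nonempty
  simp only [Set.mem_compl_iff, Set.mem_setOf_eq, not_le] at hw
  have h1 := le_of_abs_le (hn w hw)
  have h2 := hconst w
  simp only [hε] at h1
  linarith

/-- Condition `(2_p)` implies condition `(3_p)`: if every function with gradient in ℓ^p
takes only one value at infinity, then every harmonic function with gradient in ℓ^p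
is constant. -/
theorem two_p_implies_three_p {V : Type*} (G : SimpleGraph V) (hconn : G.Connected)
    (hlf : ∀ v, (G.neighborSet v).Finite) [Infinite V] (o : V) (p : ℝ) (hp : 1 ≤ p)
    (h2p : ∀ f : V → ℝ, GradLp G p f → OneValueAtInfinity G o f) :
    ∀ f : V → ℝ, IsHarmonic G hlf f → GradLp G p f → ∀ v w, f v = f w := by
  intro f hharm hgrad
  obtain ⟨c, hc⟩ := h2p f hgrad
  have hle : ∀ v, f v ≤ c := harm_le_c G hconn hlf o f hharm c hc
  have hgeq : ∀ v, c ≤ f v := by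
    have hharm' : IsHarmonic G hlf (fun v => -f v) := by
      intro v
      show -f v = _
      rw [Finset.sum_neg_distrib, neg_div, ← hharm v]
    have hc' : ∀ ε > (0 : ℝ), ∃ n : ℕ, ∀ v, n < G.dist o v → |(fun v => -f v) v - (-c)| ≤ ε := by
      intro ε hε
      obtain ⟨n, hn⟩ := hc ε hε
      refine ⟨n, fun v hv => ?_⟩
      have h1 := hn v hv
      have h : (fun v => -f v) v - -c = -(f v - c) := by ring
      rw [h, abs_neg]
      exact h1
    have := harm_le_c G hconn hlf o (fun v => -f v) hharm' (-c) hc'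
    intro v
    have h3 : -f v ≤ -c := this v
    linarith
  intro v w
  rw [le_antisymm (hle v) (hgeq v), le_antisymm (hle w) (hgeq w)]
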